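/- If A = M − N is a regular splitting with A^{-1} ≥ 0 entrywise, then ρ(M^{-1}N) = ρ(A^{-1}N)/(1 + ρ(A^{-1}N)) < 1. -/

import Mathlib

open Matrix

/-- The spectral radius of a real matrix: the supremum of the moduli of its
complex eigenvalues (elements of the spectrum of the complexified matrix). -/
noncomputable def specRad {m : Type*} [Fintype m] [DecidableEq m]
    (A : Matrix m m ℝ) : ℝ :=
  sSup {x : ℝ | ∃ μ : ℂ, μ ∈ spectrum ℂ (A.map (algebraMap ℝ ℂ)) ∧ x = ‖μ‖}

/-!
Put `G = M⁻¹N` and `T = A⁻¹N`; then `(1 + T) G = T` and `(1 - G) T = G`, both entrywise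
nonnegative. If `T x = λ x` then `G x = λ/(1+λ) x`, which bounds `ρ(T) ≤ ρ(G)/(1 - ρ(G))` once
`ρ(G) < 1`. Conversely, if `G x = μ x`, the vector `y = |x|` satisfies `G y ≥ |μ| y`; applying
the nonnegative matrix `1 + T` gives `(1 - |μ|) T y ≥ |μ| y`, which forces `|μ| < 1` and, through
`T^k y ≥ (|μ|/(1-|μ|))^k y` and Gelfand's formula, `ρ(T) ≥ |μ|/(1 - |μ|)`. The two bounds together
say exactly `ρ(G) = ρ(T)/(1 + ρ(T))`.
-/

namespace Matrix

section Nonneg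

variable {l m n R : Type*} [Fintype m] [Semiring R] [PartialOrder R] [IsOrderedRing R]

theorem mulVec_le_mulVec_of_nonneg {B : Matrix n m R} (hB : ∀ i j, 0 ≤ B i j) {x y : m → R}
    (h : x ≤ y) : B *ᵥ x ≤ B *ᵥ y :=
  fun i => dotProduct_le_dotProduct_of_nonneg_left h (hB i)

theorem mul_apply_nonneg {B : Matrix l m R} {C : Matrix m n R} (hB : ∀ i j, 0 ≤ B i j)
    (hC : ∀ i j, 0 ≤ C i j) (i : l) (j : n) : 0 ≤ (B * C) i j :=
  Finset.sum_nonneg fun k _ => mul_nonneg (hB i k) (hC k j)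

end Nonneg

variable {ι : Type*} [Fintype ι]

theorem norm_smul_le_mulVec_norm {B : Matrix ι ι ℝ} (hB : ∀ i j, 0 ≤ B i j) {μ : ℂ}
    {x : ι → ℂ} (hx : B.map (algebraMap ℝ ℂ) *ᵥ x = μ • x) :
    ‖μ‖ • (fun i => ‖x i‖) ≤ B *ᵥ fun i => ‖x i‖ := by
  intro i
  calc ‖μ‖ * ‖x i‖ = ‖(B.map (algebraMap ℝ ℂ) *ᵥ x) i‖ := by rw [hx, Pi.smul_apply, norm_smul]
    _ ≤ ∑ j, ‖B i j‖ * ‖x j‖ := by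
      simp only [mulVec, dotProduct, map_apply]
      refine (norm_sum_le _ _).trans_eq ?_
      simp [Complex.norm_real]
    _ = (B *ᵥ fun i => ‖x i‖) i := by
      simp [mulVec, dotProduct, Real.norm_of_nonneg (hB _ _)]

variable [DecidableEq ι] {K : Type*} [Field K]

theorem mem_spectrum_iff_exists_mulVec_eq_smul (B : Matrix ι ι K) (μ : K) :
    μ ∈ spectrum K B ↔ ∃ v ≠ 0, B *ᵥ v = μ • v := by
  rw [spectrum.mem_iff, isUnit_iff_isUnit_det, isUnit_iff_ne_zero, not_not,
    ← exists_mulVec_eq_zero_iff, Algebra.algebraMap_eq_smul_one]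
  simp only [sub_mulVec, smul_mulVec, one_mulVec, sub_eq_zero, eq_comm]

theorem one_add_ne_zero_and_div_mem_spectrum {X Y : Matrix ι ι K} (h : (1 - X) * Y = X) {l : K}
    (hl : l ∈ spectrum K Y) : 1 + l ≠ 0 ∧ l / (1 + l) ∈ spectrum K X := by
  obtain ⟨v, hv0, hv⟩ := (mem_spectrum_iff_exists_mulVec_eq_smul Y l).1 hl
  have hXv : (1 + l) • (X *ᵥ v) = l • v := by
    have : X *ᵥ v = l • (v - X *ᵥ v) :=
      calc X *ᵥ v = (1 - X) *ᵥ (Y *ᵥ v) := by rw [mulVec_mulVec, h]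
        _ = l • (v - X *ᵥ v) := by rw [hv, mulVec_smul, sub_mulVec, one_mulVec]
    linear_combination (norm := module) this
  have hl1 : 1 + l ≠ 0 := by
    intro h1
    have hl0 : l ≠ 0 := by rintro rfl; norm_num at h1
    rw [h1, zero_smul, eq_comm, smul_eq_zero] at hXv
    exact hXv.elim hl0 hv0
  refine ⟨hl1, (mem_spectrum_iff_exists_mulVec_eq_smul X _).2 ⟨v, hv0, ?_⟩⟩
  rw [div_eq_inv_mul, mul_smul, ← hXv, smul_smul, inv_mul_cancel₀ hl1, one_smul]

end Matrix

variable {ι : Type*} [Fintype ι] [DecidableEq ι]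

theorem bddAbove_norm_spectrum (B : Matrix ι ι ℝ) :
    BddAbove {x : ℝ | ∃ μ : ℂ, μ ∈ spectrum ℂ (B.map (algebraMap ℝ ℂ)) ∧ x = ‖μ‖} := by
  refine ((finite_spectrum (B.map (algebraMap ℝ ℂ))).image fun μ : ℂ => ‖μ‖).bddAbove.mono ?_
  rintro _ ⟨μ, hμ, rfl⟩
  exact ⟨μ, hμ, rfl⟩

theorem norm_le_specRad {B : Matrix ι ι ℝ} {μ : ℂ}
    (hμ : μ ∈ spectrum ℂ (B.map (algebraMap ℝ ℂ))) : ‖μ‖ ≤ specRad B :=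
  le_csSup (bddAbove_norm_spectrum B) ⟨μ, hμ, rfl⟩

theorem specRad_nonneg (B : Matrix ι ι ℝ) : 0 ≤ specRad B :=
  Real.sSup_nonneg fun _ ⟨μ, _, hx⟩ => hx ▸ norm_nonneg μ

theorem specRad_le {B : Matrix ι ι ℝ} {c : ℝ} (hc : 0 ≤ c)
    (h : ∀ μ ∈ spectrum ℂ (B.map (algebraMap ℝ ℂ)), ‖μ‖ ≤ c) : specRad B ≤ c :=
  Real.sSup_le (fun _ ⟨μ, hμ, hx⟩ => hx ▸ h μ hμ) hc

section LinftyOpNorm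

attribute [local instance] Matrix.linftyOpNormedAddCommGroup Matrix.linftyOpNormedRing
  Matrix.linftyOpNormedAlgebra

theorem Matrix.linfty_opNorm_map_ofReal (B : Matrix ι ι ℝ) :
    ‖B.map (algebraMap ℝ ℂ)‖ = ‖B‖ := by
  simp [linfty_opNorm_def]

theorem Matrix.pow_le_linfty_opNorm_pow_of_smul_le_mulVec {T : Matrix ι ι ℝ}
    (hT : ∀ i j, 0 ≤ T i j) {y : ι → ℝ} (hy : 0 ≤ y) (hy0 : y ≠ 0) {c : ℝ} (hc : 0 ≤ c)
    (h : c • y ≤ T *ᵥ y) (k : ℕ) : c ^ k ≤ ‖T ^ k‖ := by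
  have hpow : c ^ k • y ≤ T ^ k *ᵥ y := by
    induction k with
    | zero => simp
    | succ k ih =>
      calc c ^ (k + 1) • y = c ^ k • (c • y) := by rw [pow_succ, mul_smul]
        _ ≤ c ^ k • (T *ᵥ y) := smul_le_smul_of_nonneg_left h (pow_nonneg hc k)
        _ = T *ᵥ (c ^ k • y) := (mulVec_smul _ _ _).symm
        _ ≤ T *ᵥ (T ^ k *ᵥ y) := mulVec_le_mulVec_of_nonneg hT ih
        _ = T ^ (k + 1) *ᵥ y := by rw [pow_succ', mulVec_mulVec]
  have hnorm : ‖c ^ k • y‖ ≤ ‖T ^ k *ᵥ y‖ := by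
    refine (pi_norm_le_iff_of_nonneg (norm_nonneg _)).2 fun i => le_trans ?_ (norm_le_pi_norm _ i)
    have h0 : 0 ≤ (c ^ k • y) i := mul_nonneg (pow_nonneg hc k) (hy i)
    rw [Real.norm_of_nonneg h0, Real.norm_of_nonneg (h0.trans (hpow i))]
    exact hpow i
  rw [norm_smul, Real.norm_of_nonneg (pow_nonneg hc k)] at hnorm
  exact le_of_mul_le_mul_right (hnorm.trans (linfty_opNorm_mulVec _ _)) (norm_pos_iff.2 hy0)

theorem le_specRad_of_smul_le_mulVec {T : Matrix ι ι ℝ} (hT : ∀ i j, 0 ≤ T i j) {y : ι → ℝ}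
    (hy : 0 ≤ y) (hy0 : y ≠ 0) {c : ℝ} (hc : 0 ≤ c) (h : c • y ≤ T *ᵥ y) : c ≤ specRad T := by
  have : Nonempty ι := by
    by_contra hι
    exact hy0 (funext fun i => (hι ⟨i⟩).elim)
  set Tℂ := T.map (algebraMap ℝ ℂ)
  have hle : ∀ k : ℕ, k ≠ 0 → ENNReal.ofReal c ≤ ENNReal.ofReal (‖Tℂ ^ k‖ ^ (1 / k : ℝ)) := by
    intro k hk
    refine ENNReal.ofReal_le_ofReal ?_
    rw [show Tℂ ^ k = (T ^ k).map (algebraMap ℝ ℂ) from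
        (map_pow (algebraMap ℝ ℂ).mapMatrix T k).symm, linfty_opNorm_map_ofReal, one_div,
      ← Real.pow_rpow_inv_natCast hc hk]
    exact Real.rpow_le_rpow (pow_nonneg hc k)
      (pow_le_linfty_opNorm_pow_of_smul_le_mulVec hT hy hy0 hc h k) (by positivity)
  have hρ : ENNReal.ofReal c ≤ spectralRadius ℂ Tℂ :=
    ge_of_tendsto (spectrum.pow_norm_pow_one_div_tendsto_nhds_spectralRadius Tℂ)
      (Filter.eventually_atTop.2 ⟨1, fun k hk => hle k (by omega)⟩)
  obtain ⟨μ, hμ, hμρ⟩ := spectrum.exists_nnnorm_eq_spectralRadius Tℂ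
  rw [← hμρ, ← ENNReal.ofReal_coe_nnreal, coe_nnnorm,
    ENNReal.ofReal_le_ofReal_iff (norm_nonneg _)] at hρ
  exact hρ.trans (norm_le_specRad hμ)

end LinftyOpNorm

theorem norm_le_specRad_div_one_add_of_mem_spectrum {G T : Matrix ι ι ℝ} (hG : ∀ i j, 0 ≤ G i j)
    (hT : ∀ i j, 0 ≤ T i j) (hTG : (1 + T) * G = T) {μ : ℂ}
    (hμ : μ ∈ spectrum ℂ (G.map (algebraMap ℝ ℂ))) :
    ‖μ‖ ≤ specRad T / (1 + specRad T) := by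
  obtain ⟨x, hx0, hx⟩ := (mem_spectrum_iff_exists_mulVec_eq_smul _ μ).1 hμ
  set y : ι → ℝ := fun i => ‖x i‖
  set a := ‖μ‖
  have hy : 0 ≤ y := fun i => norm_nonneg (x i)
  have hy0 : y ≠ 0 := fun h => hx0 (funext fun i => norm_eq_zero.1 (congrFun h i))
  have hP : ∀ i j, 0 ≤ (1 + T) i j := fun i j => by
    rw [Matrix.add_apply, one_apply]
    exact add_nonneg (by split_ifs <;> norm_num) (hT i j)
  have hTy : a • y + a • (T *ᵥ y) ≤ T *ᵥ y :=
    calc a • y + a • (T *ᵥ y) = (1 + T) *ᵥ (a • y) := by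
          rw [mulVec_smul, add_mulVec, one_mulVec, smul_add]
      _ ≤ (1 + T) *ᵥ (G *ᵥ y) := mulVec_le_mulVec_of_nonneg hP (norm_smul_le_mulVec_norm hG hx)
      _ = T *ᵥ y := by rw [mulVec_mulVec, hTG]
  have hTy0 : 0 ≤ T *ᵥ y := by simpa using mulVec_le_mulVec_of_nonneg hT hy
  have ha1 : a < 1 := by
    by_contra! ha
    refine hy0 (le_antisymm (fun i => ?_) hy)
    have := hTy i
    have := hTy0 i
    simp only [Pi.add_apply, Pi.smul_apply, smul_eq_mul, Pi.zero_apply] at *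
    nlinarith
  have hs : a / (1 - a) ≤ specRad T := by
    refine le_specRad_of_smul_le_mulVec hT hy hy0 (div_nonneg (norm_nonneg μ) (by linarith))
      fun i => ?_
    have := hTy i
    simp only [Pi.add_apply, Pi.smul_apply, smul_eq_mul] at *
    rw [div_mul_eq_mul_div, div_le_iff₀ (by linarith)]
    linarith
  rw [div_le_iff₀ (by linarith)] at hs
  rw [le_div_iff₀ (by linarith [specRad_nonneg T])]
  linarith

theorem norm_le_specRad_div_one_sub_of_mem_spectrum {G T : Matrix ι ι ℝ} (hGT : (1 - G) * T = G)
    (hG1 : specRad G < 1) {l : ℂ} (hl : l ∈ spectrum ℂ (T.map (algebraMap ℝ ℂ))) :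
    ‖l‖ ≤ specRad G / (1 - specRad G) := by
  have hGTℂ : (1 - G.map (algebraMap ℝ ℂ)) * T.map (algebraMap ℝ ℂ) =
      G.map (algebraMap ℝ ℂ) := by
    have h := congrArg (algebraMap ℝ ℂ).mapMatrix hGT
    rwa [map_mul, map_sub, map_one] at h
  obtain ⟨hl1, hd⟩ := one_add_ne_zero_and_div_mem_spectrum hGTℂ hl
  set d := l / (1 + l)
  have hld : l * (1 - d) = d := by
    simp only [d]
    field_simp
    ring
  rw [le_div_iff₀ (by linarith)]
  calc ‖l‖ * (1 - specRad G) ≤ ‖l‖ * ‖1 - d‖ := by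
        gcongr
        linarith [norm_sub_norm_le (1 : ℂ) d, norm_one (α := ℂ), norm_le_specRad hd]
    _ = ‖d‖ := by rw [← norm_mul, hld]
    _ ≤ specRad G := norm_le_specRad hd

theorem specRad_eq_div_one_add_specRad {G T : Matrix ι ι ℝ} (hG : ∀ i j, 0 ≤ G i j)
    (hT : ∀ i j, 0 ≤ T i j) (hTG : (1 + T) * G = T) (hGT : (1 - G) * T = G) :
    specRad G = specRad T / (1 + specRad T) ∧ specRad G < 1 := by
  have hs := specRad_nonneg T
  have hrs : specRad G ≤ specRad T / (1 + specRad T) :=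
    specRad_le (by positivity) fun μ hμ =>
      norm_le_specRad_div_one_add_of_mem_spectrum hG hT hTG hμ
  have hr1 : specRad G < 1 := hrs.trans_lt ((div_lt_one (by positivity)).2 (by linarith))
  have hsr : specRad T ≤ specRad G / (1 - specRad G) :=
    specRad_le (div_nonneg (specRad_nonneg G) (by linarith)) fun l hl =>
      norm_le_specRad_div_one_sub_of_mem_spectrum hGT hr1 hl
  refine ⟨le_antisymm hrs ?_, hr1⟩
  rw [le_div_iff₀ (by linarith)] at hsr
  rw [div_le_iff₀ (by positivity)]
  linarith

theorem stmt17 {n : ℕ} (A M N : Matrix (Fin n) (Fin n) ℝ)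
    (hMN : A = M - N) (hM : IsUnit M) (hMinv : ∀ i j, 0 ≤ M⁻¹ i j)
    (hN : ∀ i j, 0 ≤ N i j)
    (hA : IsUnit A) (hAinv : ∀ i j, 0 ≤ A⁻¹ i j) :
    specRad (M⁻¹ * N) = specRad (A⁻¹ * N) / (1 + specRad (A⁻¹ * N)) ∧
    specRad (M⁻¹ * N) < 1 := by
  have hM' := (isUnit_iff_isUnit_det M).1 hM
  have hA' := (isUnit_iff_isUnit_det A).1 hA
  have hMA : M⁻¹ * A = 1 - M⁻¹ * N := by rw [hMN, Matrix.mul_sub, nonsing_inv_mul _ hM']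
  have hAM : A⁻¹ * M = 1 + A⁻¹ * N := by
    rw [show M = A + N by rw [hMN, sub_add_cancel], Matrix.mul_add, nonsing_inv_mul _ hA']
  refine specRad_eq_div_one_add_specRad (mul_apply_nonneg hMinv hN) (mul_apply_nonneg hAinv hN)
    ?_ ?_
  · rw [← hAM, Matrix.mul_assoc, ← Matrix.mul_assoc M, mul_nonsing_inv _ hM', Matrix.one_mul]
  · rw [← hMA, Matrix.mul_assoc, ← Matrix.mul_assoc A, mul_nonsing_inv _ hA', Matrix.one_mul]
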